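/- The functions u(x,y) = y·tanh(x) and v(x,y) = (1/2)y²·sech²(x) − (1/2)cosh²(x) satisfy ∂u/∂x = ∂v/∂y and ∂v/∂x = −2(v² + y²)^{1/2} ∂u/∂y at every point of ℝ². -/

import Mathlib

/-- u(x,y) = y tanh x. -/
noncomputable def uCat (x y : ℝ) : ℝ := y * Real.tanh x

/-- v(x,y) = (1/2) y² sech² x − (1/2) cosh² x. -/
noncomputable def vCat (x y : ℝ) : ℝ :=
  (1 / 2) * y ^ 2 * ((Real.cosh x)⁻¹) ^ 2 - (1 / 2) * (Real.cosh x) ^ 2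

open Real in
lemma tanh_hasDerivAt (x : ℝ) : HasDerivAt Real.tanh ((Real.cosh x)⁻¹ ^ 2) x := by
  have hc : Real.cosh x ≠ 0 := (Real.cosh_pos x).ne'
  have h := (Real.hasDerivAt_sinh x).div (Real.hasDerivAt_cosh x) hc
  have : (Real.cosh x * Real.cosh x - Real.sinh x * Real.sinh x) / Real.cosh x ^ 2
      = (Real.cosh x)⁻¹ ^ 2 := by
    rw [show Real.cosh x * Real.cosh x - Real.sinh x * Real.sinh x = 1 by
      have := Real.cosh_sq_sub_sinh_sq x; ring_nf; ring_nf at this; linarith]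
    field_simp
  rw [this] at h
  exact h.congr_of_eventuallyEq (by filter_upwards with t; rw [Real.tanh_eq_sinh_div_cosh, Pi.div_apply])

theorem catenoid_solution (x y : ℝ) :
    deriv (fun t : ℝ => uCat t y) x = deriv (fun t : ℝ => vCat x t) y ∧
    deriv (fun t : ℝ => vCat t y) x =
      -2 * Real.sqrt ((vCat x y) ^ 2 + y ^ 2) * deriv (fun t : ℝ => uCat x t) y := by
  have hc : Real.cosh x ≠ 0 := (Real.cosh_pos x).ne'
  have hpyth : Real.cosh x ^ 2 - Real.sinh x ^ 2 = 1 := Real.cosh_sq_sub_sinh_sq x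
  -- u_x
  have hux : HasDerivAt (fun t : ℝ => uCat t y) (y * (Real.cosh x)⁻¹ ^ 2) x := by
    simpa [uCat] using (tanh_hasDerivAt x).const_mul y
  -- v_y
  have hvy : HasDerivAt (fun t : ℝ => vCat x t) (y * (Real.cosh x)⁻¹ ^ 2) y := by
    have h := (((hasDerivAt_pow 2 y).const_mul (1/2:ℝ)).mul_const
      (((Real.cosh x)⁻¹) ^ 2)).sub_const ((1/2) * (Real.cosh x) ^ 2)
    simp only [vCat]
    refine h.congr_deriv ?_
    push_cast
    ring
  -- u_y
  have huy : HasDerivAt (fun t : ℝ => uCat x t) (Real.tanh x) y := by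
    simpa [uCat] using (hasDerivAt_id y).mul_const (Real.tanh x)
  -- v_x
  have hvx : HasDerivAt (fun t : ℝ => vCat t y)
      (-(y ^ 2 * Real.sinh x / Real.cosh x ^ 3) - Real.sinh x * Real.cosh x) x := by
    have hinv : HasDerivAt (fun t : ℝ => ((Real.cosh t)⁻¹) ^ 2)
        (-2 * Real.sinh x / Real.cosh x ^ 3) x := by
      have h1 : HasDerivAt (fun t : ℝ => (Real.cosh t)⁻¹)
          (-(Real.sinh x) / Real.cosh x ^ 2) x := (Real.hasDerivAt_cosh x).inv hc
      have := h1.pow 2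
      refine this.congr_deriv ?_
      push_cast
      rw [pow_one]
      ring
    have h2 : HasDerivAt (fun t : ℝ => (1/2:ℝ) * y ^ 2 * ((Real.cosh t)⁻¹) ^ 2)
        ((1/2) * y ^ 2 * (-2 * Real.sinh x / Real.cosh x ^ 3)) x :=
      hinv.const_mul _
    have h3 : HasDerivAt (fun t : ℝ => (1/2:ℝ) * (Real.cosh t) ^ 2)
        ((1/2) * (2 * Real.cosh x ^ 1 * Real.sinh x)) x :=
      ((Real.hasDerivAt_cosh x).pow 2).const_mul _
    have h := h2.sub h3
    unfold vCat
    refine h.congr_deriv ?_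
    ring
  refine ⟨by rw [hux.deriv, hvy.deriv], ?_⟩
  rw [hvx.deriv, huy.deriv]
  have hsq : (vCat x y) ^ 2 + y ^ 2
      = ((1 / 2) * y ^ 2 * ((Real.cosh x)⁻¹) ^ 2 + (1 / 2) * (Real.cosh x) ^ 2) ^ 2 := by
    unfold vCat
    field_simp
    ring
  have hnn : 0 ≤ (1 / 2) * y ^ 2 * ((Real.cosh x)⁻¹) ^ 2 + (1 / 2) * (Real.cosh x) ^ 2 := by
    positivity
  rw [hsq, Real.sqrt_sq hnn, Real.tanh_eq_sinh_div_cosh]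
  field_simp
  ring
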